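/- arXiv:2102.08705 — 7 statements merged into one kernel-verified Lean document; each statement's English description precedes it below -/
import Mathlib

section
/- Let Σ be an alphabet, σ ∈ Σ a fixed letter, and p : Σ → Σ* a word substitution such that p(τ) = τ for every letter τ ≠ σ, and such that the letter σ occurs in the word p(σ). Then p is com-injective, i.e., the induced map on multisets over Σ, sending a multiset m to the multiset sum of the letter-multisets of p(a) taken with multiplicity m(a), is injective. -/
/-- a one-letter substitution that does not vanish its letter is
com-injective (Lemma 4.5). The alphabet Σ is `A`. -/
theorem stmt_5 {A : Type*} (σ : A) (p : A → List A)
    (hfix : ∀ τ : A, τ ≠ σ → p τ = [τ]) (hocc : σ ∈ p σ) :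
    Function.Injective (fun m : Multiset A => m.bind fun a => (↑(p a) : Multiset A)) := by
  classical
  have key : ∀ (m : Multiset A) (a : A),
      (m.bind fun a => (↑(p a) : Multiset A)).count a =
        m.count σ * ((p σ : Multiset A)).count a +
          (if a = σ then 0 else m.count a) := by
    intro m a
    induction m using Multiset.induction_on with
    | empty => simp
    | cons b m ih =>
      rw [Multiset.cons_bind, Multiset.count_add, ih]
      by_cases hb : b = σ
      · rw [hb, Multiset.count_cons_self]
        by_cases ha : a = σ
        · simp [ha]; ring
        · rw [Multiset.count_cons_of_ne ha]
          simp [ha]; ring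
      · rw [hfix b hb, Multiset.count_cons_of_ne (Ne.symm hb)]
        by_cases ha : a = σ
        · rw [ha]
          simp [Multiset.count_singleton, Ne.symm hb]
        · simp only [ha, if_false]
          rw [Multiset.count_cons]
          simp only [Multiset.coe_singleton, Multiset.count_singleton]
          ring
  intro m1 m2 h
  simp only at h
  have hk : 0 < ((p σ : Multiset A)).count σ := Multiset.count_pos.mpr (by simpa using hocc)
  have hσ : m1.count σ = m2.count σ := by
    have := congrArg (Multiset.count σ) h
    rw [key, key] at this
    simp only [if_pos rfl, add_zero] at this
    exact Nat.eq_of_mul_eq_mul_right hk this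
  ext a
  have := congrArg (Multiset.count a) h
  rw [key, key, hσ] at this
  by_cases ha : a = σ
  · subst ha; exact hσ
  · simp only [ha, if_false] at this
    exact Nat.add_left_cancel this
end

section
/- Let Σ be a finite alphabet and p : Σ → Σ* a word substitution. If p is com-injective, then the Σ×Σ matrix M over ℚ whose entry M(a,b) is the number of occurrences of the letter a in the word p(b) has nonzero determinant (equivalently, M is invertible over ℚ). -/
/-!
The multiset `m.bind p` has count vector `M *ᵥ count m`, so com-injectivity says that `M` is
injective on `ℕ`-vectors. Splitting an integer kernel vector `v = v⁺ - v⁻` into its positive and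
negative parts gives `M *ᵥ v⁺ = M *ᵥ v⁻`, hence `v = 0`; so `det M ≠ 0` over `ℤ`, and thus over
every ring of characteristic zero.
-/

open Matrix

theorem Multiset.count_bind_eq_sum {α β : Type*} [Fintype α] [DecidableEq α] [DecidableEq β]
    (m : Multiset α) (f : α → Multiset β) (b : β) :
    (m.bind f).count b = ∑ a, m.count a * (f a).count b := by
  rw [Multiset.count_bind, Finset.sum_multiset_map_count]
  refine Finset.sum_subset (Finset.subset_univ _) fun a _ ha => ?_
  rw [Multiset.count_eq_zero.mpr (by simpa using ha), zero_smul]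

theorem Multiset.mulVec_count_injective_of_bind_injective {α β : Type*} [Fintype α]
    [DecidableEq α] [DecidableEq β] (f : α → Multiset β)
    (hf : Function.Injective fun m : Multiset α => m.bind f) :
    Function.Injective (Matrix.of fun b a => (f a).count b).mulVec := by
  intro u v huv
  let toMultiset (w : α → ℕ) : Multiset α := Finsupp.toMultiset (Finsupp.equivFunOnFinite.symm w)
  have count_toMultiset (w : α → ℕ) (a : α) : (toMultiset w).count a = w a :=
    Finsupp.count_toMultiset _ a
  have hbind : (toMultiset u).bind f = (toMultiset v).bind f := by
    ext b
    simpa [Multiset.count_bind_eq_sum, count_toMultiset, mulVec, dotProduct, mul_comm]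
      using congrFun huv b
  funext a
  rw [← count_toMultiset u, ← count_toMultiset v, hf hbind]

theorem Matrix.eq_zero_of_map_intCast_mulVec_eq_zero {m n : Type*} [Fintype n]
    {M : Matrix m n ℕ} (hM : Function.Injective M.mulVec) {v : n → ℤ}
    (hv : M.map ((↑) : ℕ → ℤ) *ᵥ v = 0) : v = 0 := by
  have cast_mulVec (u : n → ℕ) :
      M.map ((↑) : ℕ → ℤ) *ᵥ (fun i => (u i : ℤ)) = fun j => ((M *ᵥ u) j : ℤ) :=
    funext fun j => ((Nat.castRingHom ℤ).map_mulVec M u j).symm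
  have hsplit : v = (fun i => ((v i).toNat : ℤ)) - fun i => ((-v i).toNat : ℤ) := by
    funext i; simp only [Pi.sub_apply]; omega
  have hparts : M *ᵥ (fun i => (v i).toNat) = M *ᵥ fun i => (-v i).toNat := by
    rw [hsplit, mulVec_sub, sub_eq_zero, cast_mulVec, cast_mulVec] at hv
    exact funext fun j => by exact_mod_cast congrFun hv j
  funext i
  have := congrFun (hM hparts) i
  simp only [Pi.zero_apply]
  omega

theorem Matrix.det_map_natCast_ne_zero_of_mulVec_injective {n : Type*} [Fintype n]
    [DecidableEq n] (M : Matrix n n ℕ) (hM : Function.Injective M.mulVec) {R : Type*}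
    [CommRing R] [CharZero R] : (M.map ((↑) : ℕ → R)).det ≠ 0 := by
  have hdetℤ : (M.map ((↑) : ℕ → ℤ)).det ≠ 0 := by
    intro hdet
    obtain ⟨v, hv, hMv⟩ := exists_mulVec_eq_zero_iff.mpr hdet
    exact hv (eq_zero_of_map_intCast_mulVec_eq_zero hM hMv)
  have hmap : M.map ((↑) : ℕ → R) = (Int.castRingHom R).mapMatrix (M.map ((↑) : ℕ → ℤ)) := by
    ext; simp
  rw [hmap, ← RingHom.map_det, eq_intCast]
  exact_mod_cast hdetℤ

/-- for a com-injective substitution p over a finite alphabet `A`,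
the letter-count matrix M(a,b) = (number of occurrences of a in p(b)) has
nonzero determinant over ℚ. -/
theorem stmt_6 {A : Type*} [Fintype A] [DecidableEq A] (p : A → List A)
    (hp : Function.Injective (fun m : Multiset A => m.bind fun a => (↑(p a) : Multiset A))) :
    (Matrix.of fun a b : A => ((p b).count a : ℚ)).det ≠ 0 := by
  have hM := Multiset.mulVec_count_injective_of_bind_injective _ hp
  convert det_map_natCast_ne_zero_of_mulVec_injective _ hM (R := ℚ) using 2
  ext; simp
end

section
/- Let Σ be an alphabet and p : Σ → Σ* a word substitution. Let ψ_p be the ℚ-algebra endomorphism of the polynomial ring ℚ[{x̄_a}_{a∈Σ}] determined by x̄_a ↦ ∏_{i} x̄_{p(a)_i} (the product of the variables of the letters of p(a), with multiplicity). Then ψ_p is injective if and only if p is com-injective. -/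
/-! A monomial `∏ x̄_a ^ m(a)`, with exponent multiset `m`, is sent by `ψ_p` to the monomial with
exponent multiset `m.bind p`. So `ψ_p` is the map of monoid algebras `ℚ[ℕ^(Σ)] → ℚ[ℕ^(Σ)]`
induced by the additive exponent map `m ↦ m.bind p`, and such a map is injective exactly when
the exponent map is: distinct monomials have distinct images. -/

open MvPolynomial

theorem MvPolynomial.prod_map_X_eq_monomial {σ R : Type*} [CommSemiring R] [DecidableEq σ]
    (l : List σ) :
    (l.map fun i => (X i : MvPolynomial σ R)).prod =
      monomial (Multiset.toFinsupp (l : Multiset σ)) 1 := by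
  induction l with
  | nil => simp
  | cons i l ih =>
    rw [List.map_cons, List.prod_cons, ih, X, monomial_mul, one_mul, ← Multiset.cons_coe,
      ← Multiset.singleton_add, Multiset.toFinsupp_add, Multiset.toFinsupp_singleton]

section MonomialSubstitution

variable {σ τ R : Type*} [CommSemiring R] (g : (σ →₀ ℕ) →+ (τ →₀ ℕ))

theorem MvPolynomial.aeval_monomial_eq_mapDomainAlgHom :
    aeval (fun i => monomial (g (Finsupp.single i 1)) (1 : R)) =
      (AddMonoidAlgebra.mapDomainAlgHom R R g :
        MvPolynomial σ R →ₐ[R] MvPolynomial τ R) :=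
  algHom_ext fun i => by
    rw [aeval_X, X, AddMonoidAlgebra.mapDomainAlgHom_apply, ← single_eq_monomial,
      ← single_eq_monomial, AddMonoidAlgebra.mapDomain_single]

theorem MvPolynomial.injective_aeval_monomial_iff [Nontrivial R] :
    Function.Injective (aeval (R := R) fun i => monomial (g (Finsupp.single i 1)) (1 : R)) ↔
      Function.Injective g := by
  rw [aeval_monomial_eq_mapDomainAlgHom]
  refine ⟨fun h d d' hdd' => ?_, fun h => AddMonoidAlgebra.mapDomain_injective h⟩
  apply monomial_left_injective (one_ne_zero (α := R))
  apply h
  simp [← single_eq_monomial, hdd']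

end MonomialSubstitution

def Multiset.bindAddMonoidHom {α β : Type*} (f : α → Multiset β) : Multiset α →+ Multiset β where
  toFun m := m.bind f
  map_zero' := Multiset.zero_bind f
  map_add' m n := Multiset.add_bind m n f

/-- the ℚ-algebra endomorphism ψ_p : x̄_a ↦ ∏ᵢ x̄_{p(a)ᵢ} of
ℚ[{x̄_a}] is injective iff the word substitution p is com-injective. -/
theorem stmt_8 {A : Type*} (p : A → List A) :
    Function.Injective
        (MvPolynomial.aeval (R := ℚ)
          (fun a : A => ((p a).map fun b => (X b : MvPolynomial A ℚ)).prod)) ↔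
      Function.Injective
        (fun m : Multiset A => m.bind fun a => (↑(p a) : Multiset A)) := by
  classical
  let g : (A →₀ ℕ) →+ (A →₀ ℕ) := Multiset.toFinsupp.toAddMonoidHom.comp
    ((Multiset.bindAddMonoidHom fun a => (p a : Multiset A)).comp
      Multiset.toFinsupp.symm.toAddMonoidHom)
  have hg_single (a : A) : g (Finsupp.single a 1) = Multiset.toFinsupp (p a : Multiset A) := by
    simp [g, Multiset.bindAddMonoidHom]
  have hg_injective : Function.Injective g ↔
      Function.Injective fun m : Multiset A => m.bind fun a => (p a : Multiset A) := by
    simp only [g, AddMonoidHom.coe_comp, AddEquiv.toAddMonoidHom_eq_coe, AddMonoidHom.coe_coe,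
      EquivLike.comp_injective, EquivLike.injective_comp]
    rfl
  simp only [prod_map_X_eq_monomial, ← hg_single]
  rw [injective_aeval_monomial_iff, hg_injective]
end

section
/- Let Σ be a finite alphabet and p : Σ → Σ* a com-injective word substitution. Encode words w = a₁…aₙ ∈ Σ* as polynomials in ℚ[{x̃_a}_{a∈Σ} ∪ {x̄_a}_{a∈Σ}] by bar(w) := ∏ᵢ x̄_{aᵢ} and tilde(ε) := 0, tilde(a·w) := x̃_a·bar(w) + tilde(w). Let φ_p be the ℚ-algebra endomorphism of ℚ[{x̃_a}_{a∈Σ} ∪ {x̄_a}_{a∈Σ}] determined by x̃_a ↦ tilde(p(a)) and x̄_a ↦ bar(p(a)). Then φ_p is injective. -/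
/-!
Split the variables, `ℚ[x̃, x̄] ≃ ℚ[x̄][x̃]` (`sumAlgEquiv`). The images `bar(p a)` are monomials,
so on the coefficient ring `ℚ[x̄]` the map `φ_p` acts on exponent vectors by `e ↦ Σ_a e_a • p(a)`,
which is the com-injective map on multisets; a monomial map with injective exponent map is
injective. The images `tilde(p a)` are linear forms in the `x̃` with coefficient matrix `T` over
`ℚ[x̄]`. At `x̄ = 1`, `T` becomes the letter-count matrix of `p`, and its determinant is nonzero:
an integer kernel vector `v = v⁺ - v⁻` would give two multisets with the same image.
So `φ_p` is an injective map of coefficients followed by a linear substitution with nonzero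
determinant over a domain, which is invertible over the fraction field.
-/

open MvPolynomial

/-- bar(w) = ∏ᵢ x̄_{wᵢ}; bar variables are indexed by `Sum.inr`. -/
noncomputable def barE {A : Type*} (w : List A) : MvPolynomial (A ⊕ A) ℚ :=
  (w.map fun a => (X (Sum.inr a) : MvPolynomial (A ⊕ A) ℚ)).prod

/-- tilde(ε) = 0, tilde(a·w) = x̃_a · bar(w) + tilde(w); tilde variables are
indexed by `Sum.inl`. -/
noncomputable def tildeE {A : Type*} : List A → MvPolynomial (A ⊕ A) ℚ
  | [] => 0
  | a :: w => X (Sum.inl a) * barE w + tildeE w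

namespace MvPolynomial

section MonomialMap

variable {R σ τ : Type*} [CommSemiring R]

noncomputable def monomialMap (f : (σ →₀ ℕ) →+ (τ →₀ ℕ)) :
    MvPolynomial σ R →ₐ[R] MvPolynomial τ R :=
  AddMonoidAlgebra.mapDomainAlgHom R R f

theorem monomialMap_monomial (f : (σ →₀ ℕ) →+ (τ →₀ ℕ)) (s : σ →₀ ℕ) (r : R) :
    monomialMap f (monomial s r) = monomial (f s) r :=
  AddMonoidAlgebra.mapDomain_single

theorem monomialMap_X (f : (σ →₀ ℕ) →+ (τ →₀ ℕ)) (i : σ) :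
    monomialMap f (X i : MvPolynomial σ R) = monomial (f (Finsupp.single i 1)) 1 :=
  monomialMap_monomial f _ _

theorem monomialMap_injective {f : (σ →₀ ℕ) →+ (τ →₀ ℕ)} (hf : Function.Injective f) :
    Function.Injective (monomialMap (R := R) f) :=
  AddMonoidAlgebra.mapDomain_injective hf

theorem prod_map_X [DecidableEq σ] (w : List σ) :
    (w.map (X : σ → MvPolynomial σ R)).prod = monomial (Multiset.toFinsupp ↑w) 1 := by
  induction w with
  | nil => simp
  | cons a w ih =>
    rw [List.map_cons, List.prod_cons, ih, X, monomial_mul, one_mul, ← Multiset.cons_coe,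
      ← Multiset.singleton_add, map_add, Multiset.toFinsupp_singleton]

end MonomialMap

section LinearSubst

variable {R σ : Type*} [Fintype σ]

section CommSemiring

variable [CommSemiring R]

noncomputable def linearSubst (M : Matrix σ σ R) : MvPolynomial σ R →ₐ[R] MvPolynomial σ R :=
  aeval fun i => ∑ j, C (M i j) * X j

theorem linearSubst_X (M : Matrix σ σ R) (i : σ) :
    linearSubst M (X i) = ∑ j, C (M i j) * X j :=
  aeval_X _ i

theorem linearSubst_comp_linearSubst (M N : Matrix σ σ R) :
    (linearSubst N).comp (linearSubst M) = linearSubst (M * N) := by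
  ext i : 1
  simp only [AlgHom.comp_apply, linearSubst_X, map_sum, map_mul, algHom_C, algebraMap_eq,
    Finset.mul_sum, Matrix.mul_apply, Finset.sum_mul]
  rw [Finset.sum_comm]
  simp only [← mul_assoc, ← C_mul]

theorem linearSubst_one [DecidableEq σ] : linearSubst (1 : Matrix σ σ R) = AlgHom.id R _ := by
  ext i : 1
  simp [linearSubst_X, Matrix.one_apply, ite_mul]

theorem map_linearSubst {S : Type*} [CommSemiring S] (f : R →+* S) (M : Matrix σ σ R)
    (q : MvPolynomial σ R) : map f (linearSubst M q) = linearSubst (M.map f) (map f q) := by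
  induction q using MvPolynomial.induction_on with
  | C r => simp [linearSubst]
  | add q q' hq hq' => simp only [map_add, hq, hq']
  | mul_X q i hq => simp [hq, linearSubst_X]

end CommSemiring

section CommRing

variable [CommRing R] [DecidableEq σ]

theorem linearSubst_injective_of_isUnit_det {M : Matrix σ σ R} (h : IsUnit M.det) :
    Function.Injective (linearSubst M) := by
  refine Function.LeftInverse.injective (g := linearSubst M⁻¹) fun q => ?_
  rw [← AlgHom.comp_apply, linearSubst_comp_linearSubst, Matrix.mul_nonsing_inv _ h,
    linearSubst_one, AlgHom.id_apply]

theorem linearSubst_injective [IsDomain R] {M : Matrix σ σ R} (h : M.det ≠ 0) :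
    Function.Injective (linearSubst M) := by
  let K := FractionRing R
  have hK : Function.Injective (algebraMap R K) := IsFractionRing.injective R K
  have hdet : IsUnit (M.map (algebraMap R K)).det := by
    rw [← RingHom.mapMatrix_apply, ← RingHom.map_det]
    exact isUnit_iff_ne_zero.2 ((map_ne_zero_iff _ hK).2 h)
  intro q q' hqq'
  apply map_injective _ hK
  apply linearSubst_injective_of_isUnit_det hdet
  rw [← map_linearSubst, ← map_linearSubst, hqq']

end CommRing

end LinearSubst

end MvPolynomial

namespace WordSubst

variable {A : Type*}

theorem sumAlgEquiv_barE (w : List A) : sumAlgEquiv ℚ A A (barE w) = C (w.map X).prod := by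
  simp [barE, map_list_prod, Function.comp_def, sumAlgEquiv_X_inr]

variable [DecidableEq A] (p : A → List A)

noncomputable def exponentMap : (A →₀ ℕ) →+ (A →₀ ℕ) where
  toFun e := Multiset.toFinsupp ((Finsupp.toMultiset e).bind fun a => ↑(p a))
  map_zero' := by simp
  map_add' e e' := by simp [Multiset.add_bind]

theorem exponentMap_injective
    (hp : Function.Injective fun m : Multiset A => m.bind fun a => (↑(p a) : Multiset A)) :
    Function.Injective (exponentMap p) :=
  Multiset.toFinsupp.injective.comp (hp.comp Multiset.toFinsupp.symm.injective)

theorem exponentMap_single (a : A) :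
    exponentMap p (Finsupp.single a 1) = Multiset.toFinsupp ↑(p a) := by
  simp [exponentMap]

theorem exponentMap_apply [Fintype A] (e : A →₀ ℕ) (b : A) :
    exponentMap p e b = ∑ a, e a * (p a).count b := by
  induction e using Finsupp.induction_linear with
  | zero => simp
  | add e e' he he' => simp [he, he', add_mul, Finset.sum_add_distrib]
  | single a n =>
    rw [← mul_one n, ← smul_eq_mul, ← Finsupp.smul_single, map_nsmul, exponentMap_single]
    simp [Finsupp.single_apply, ite_mul]

def countMatrix : Matrix A A ℤ := Matrix.of fun a b => (p a).count b

theorem det_countMatrix_ne_zero [Fintype A] (hp : Function.Injective (exponentMap p)) :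
    (countMatrix p).det ≠ 0 := by
  intro h
  obtain ⟨v, hv0, hv⟩ := Matrix.exists_vecMul_eq_zero_iff.2 h
  let pos : A →₀ ℕ := Finsupp.equivFunOnFinite.symm fun a => (v a).toNat
  let neg : A →₀ ℕ := Finsupp.equivFunOnFinite.symm fun a => (-v a).toNat
  have hpn : exponentMap p pos = exponentMap p neg := by
    ext b
    have hb : ∑ a, v a * (p a).count b = 0 := congrFun hv b
    zify
    simp only [exponentMap_apply, pos, neg, Finsupp.coe_equivFunOnFinite_symm]
    push_cast
    rw [← sub_eq_zero, ← Finset.sum_sub_distrib, ← hb]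
    refine Finset.sum_congr rfl fun a _ => ?_
    rw [← sub_mul, Int.toNat_sub_toNat_neg]
  refine hv0 (funext fun a => ?_)
  have := DFunLike.congr_fun (hp hpn) a
  simp only [pos, neg, Finsupp.coe_equivFunOnFinite_symm] at this
  simp only [Pi.zero_apply]
  omega

noncomputable def tildeCoeff : List A → A → MvPolynomial A ℚ
  | [] => 0
  | a :: w => Pi.single a (w.map X).prod + tildeCoeff w

theorem eval_one_tildeCoeff (w : List A) (b : A) : eval 1 (tildeCoeff w b) = w.count b := by
  induction w with
  | nil => simp [tildeCoeff]
  | cons a w ih =>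
    simp only [tildeCoeff, Pi.add_apply, map_add, ih, List.count_cons, Pi.single_apply, beq_iff_eq,
      eq_comm (a := b)]
    split <;> simp [add_comm, map_list_prod, Function.comp_def]

theorem sumAlgEquiv_tildeE [Fintype A] (w : List A) :
    sumAlgEquiv ℚ A A (tildeE w) = ∑ b, C (tildeCoeff w b) * X b := by
  induction w with
  | nil => simp [tildeE, tildeCoeff]
  | cons a w ih =>
    simp only [tildeE, tildeCoeff, map_add, map_mul, ih, sumAlgEquiv_X_inl, sumAlgEquiv_barE,
      Pi.add_apply, add_mul, Finset.sum_add_distrib, Pi.single_apply, apply_ite C, map_zero,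
      ite_mul, zero_mul, Finset.sum_ite_eq', Finset.mem_univ, if_true]
    ring

noncomputable def tildeMatrix : Matrix A A (MvPolynomial A ℚ) :=
  Matrix.of fun a b => tildeCoeff (p a) b

theorem det_tildeMatrix_ne_zero [Fintype A] (hp : Function.Injective (exponentMap p)) :
    (tildeMatrix p).det ≠ 0 := by
  intro h
  have hev : (tildeMatrix p).map (eval 1) = (countMatrix p).map (Int.castRingHom ℚ) := by
    ext a b
    simp [tildeMatrix, countMatrix, eval_one_tildeCoeff]
  apply det_countMatrix_ne_zero p hp
  have := congrArg Matrix.det hev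
  rw [← RingHom.mapMatrix_apply, ← RingHom.mapMatrix_apply, ← RingHom.map_det,
    ← RingHom.map_det, h, map_zero] at this
  simpa using this.symm

theorem sumAlgEquiv_comp_aeval [Fintype A] :
    (sumAlgEquiv ℚ A A).toAlgHom.comp
        (aeval (Sum.elim (fun a => tildeE (p a)) (fun a => barE (p a))))
      = ((linearSubst (tildeMatrix p)).restrictScalars ℚ).comp
          ((mapAlgHom (monomialMap (exponentMap p))).comp (sumAlgEquiv ℚ A A).toAlgHom) := by
  ext (a | a) : 1
  · simp [sumAlgEquiv_tildeE, sumAlgEquiv_X_inl, linearSubst_X, tildeMatrix]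
  · simp [sumAlgEquiv_barE, sumAlgEquiv_X_inr, linearSubst, monomialMap_X, exponentMap_single,
      prod_map_X]

end WordSubst

open WordSubst

/-- for a com-injective word substitution p over a finite alphabet,
the ℚ-algebra endomorphism φ_p : x̃_a ↦ tilde(p(a)), x̄_a ↦ bar(p(a)) of the
encoding ring ℚ[{x̃_a} ∪ {x̄_a}] is injective. -/
theorem stmt_9 {A : Type*} [Fintype A] (p : A → List A)
    (hp : Function.Injective (fun m : Multiset A => m.bind fun a => (↑(p a) : Multiset A))) :
    Function.Injective
      (MvPolynomial.aeval (R := ℚ)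
        (Sum.elim (fun a : A => tildeE (p a)) (fun a : A => barE (p a)))) := by
  classical
  have hexp := exponentMap_injective p hp
  have hψ : Function.Injective (((linearSubst (tildeMatrix p)).restrictScalars ℚ).comp
      ((mapAlgHom (monomialMap (exponentMap p))).comp (sumAlgEquiv ℚ A A).toAlgHom)) :=
    (linearSubst_injective (det_tildeMatrix_ne_zero p hexp)).comp
      ((map_injective _ (monomialMap_injective hexp)).comp (sumAlgEquiv ℚ A A).injective)
  rw [← sumAlgEquiv_comp_aeval, AlgHom.coe_comp] at hψ
  exact hψ.of_comp
end

section
/- Let Σ be an alphabet. Encode words w = a₁…aₙ ∈ Σ* as polynomials in ℚ[{x̃_a}_{a∈Σ} ∪ {x̄_a}_{a∈Σ}] by bar(w) := ∏ᵢ x̄_{aᵢ} and tilde(ε) := 0, tilde(a·w) := x̃_a·bar(w) + tilde(w). Then the map w ↦ (tilde(w), bar(w)) is injective on Σ*. -/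
open MvPolynomial

/-- exponent vector of barE -/
noncomputable def fE {A : Type*} (w : List A) : (A ⊕ A) →₀ ℕ :=
  (w.map fun a => Finsupp.single (Sum.inr a) 1).sum

lemma fE_nil {A : Type*} : fE ([] : List A) = 0 := rfl

lemma fE_cons {A : Type*} (a : A) (w : List A) :
    fE (a :: w) = Finsupp.single (Sum.inr a) 1 + fE w := by
  simp [fE]

lemma barE_eq_monomial {A : Type*} (w : List A) :
    barE w = monomial (fE w) (1 : ℚ) := by
  induction w with
  | nil => simp [barE, fE_nil]
  | cons a w ih =>
    simp only [barE, List.map_cons, List.prod_cons] at *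
    rw [ih, fE_cons, X, monomial_mul, one_mul]

lemma fE_inl {A : Type*} (w : List A) (a : A) : fE w (Sum.inl a) = 0 := by
  induction w with
  | nil => simp [fE_nil]
  | cons b w ih =>
    rw [fE_cons]
    simp [Finsupp.single_apply, ih]

lemma fE_sum {A : Type*} (w : List A) :
    (fE w).sum (fun _ n => n) = w.length := by
  induction w with
  | nil => simp [fE_nil]
  | cons a w ih =>
    classical
    rw [fE_cons, Finsupp.sum_add_index (by simp) (by simp)]
    simp [ih]
    omega

lemma tildeE_totalDegree {A : Type*} (w : List A) :
    (tildeE w).totalDegree ≤ w.length := by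
  induction w with
  | nil => simp [tildeE]
  | cons a w ih =>
    refine le_trans (totalDegree_add _ _) (max_le ?_ (ih.trans (by simp)))
    refine le_trans (totalDegree_mul _ _) ?_
    rw [barE_eq_monomial, totalDegree_X, totalDegree_monomial _ (one_ne_zero), fE_sum]
    simp only [List.length_cons]
    omega

lemma key {A : Type*} : ∀ (w v : List A),
    tildeE w = tildeE v → barE w = barE v → w = v := by
  intro w
  induction w with
  | nil =>
    intro v ht hb
    cases v with
    | nil => rfl
    | cons b v =>
      exfalso
      have h0 : (barE ([] : List A)).totalDegree = (barE (b :: v)).totalDegree := by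
        rw [hb]
      rw [barE_eq_monomial, barE_eq_monomial, totalDegree_monomial _ (one_ne_zero),
        totalDegree_monomial _ (one_ne_zero), fE_sum, fE_sum] at h0
      simp at h0
  | cons a w ih =>
    intro v ht hb
    cases v with
    | nil =>
      exfalso
      have h0 : (barE (a :: w)).totalDegree = (barE ([] : List A)).totalDegree := by
        rw [hb]
      rw [barE_eq_monomial, barE_eq_monomial, totalDegree_monomial _ (one_ne_zero),
        totalDegree_monomial _ (one_ne_zero), fE_sum, fE_sum] at h0
      simp at h0
    | cons b v =>
      -- lengths equal
      classical
      have hbm : fE (a :: w) = fE (b :: v) := by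
        have h1 := hb
        rw [barE_eq_monomial, barE_eq_monomial] at h1
        have h2 := congrArg (coeff (fE (a :: w))) h1
        rw [coeff_monomial, coeff_monomial, if_pos rfl] at h2
        by_contra hne
        rw [if_neg (fun h => hne h.symm)] at h2
        norm_num at h2
      have hlen : w.length = v.length := by
        have := congrArg (fun d : (A ⊕ A) →₀ ℕ => d.sum fun _ n => n) hbm
        simp only [fE_sum, List.length_cons] at this
        omega
      -- key coefficient argument
      set d : (A ⊕ A) →₀ ℕ := Finsupp.single (Sum.inl a) 1 + fE w with hd
      have hdsum : (d.sum fun _ n => n) = w.length + 1 := by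
        rw [hd, Finsupp.sum_add_index (by simp) (by simp), fE_sum]
        simp [add_comm]
      have hXbar : ∀ (c : A) (u : List A),
          X (Sum.inl c) * barE u
            = monomial (Finsupp.single (Sum.inl c) 1 + fE u) (1 : ℚ) := by
        intro c u
        rw [barE_eq_monomial, X, monomial_mul, one_mul]
      have hzero : ∀ u : List A, u.length ≤ w.length → coeff d (tildeE u) = 0 := by
        intro u hu
        apply coeff_eq_zero_of_totalDegree_lt
        calc (tildeE u).totalDegree ≤ u.length := tildeE_totalDegree u
          _ < w.length + 1 := by omega
          _ = ∑ i ∈ d.support, d i := by rw [← hdsum]; rfl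
      have hc := congrArg (coeff d) ht
      simp only [tildeE, coeff_add, hXbar, hzero w le_rfl, hzero v (le_of_eq hlen.symm),
        add_zero] at hc
      rw [coeff_monomial, coeff_monomial, if_pos rfl] at hc
      have heq : Finsupp.single (Sum.inl b) 1 + fE v = d := by
        by_contra hne
        rw [if_neg hne] at hc
        norm_num at hc
      have hab : a = b := by
        have := congrArg (fun g : (A ⊕ A) →₀ ℕ => g (Sum.inl a)) heq
        simp only [hd, Finsupp.add_apply, Finsupp.single_apply, fE_inl, add_zero,
          if_pos rfl] at this
        by_cases h : (Sum.inl b : A ⊕ A) = Sum.inl a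
        · exact (Sum.inl.inj h).symm
        · simp [if_neg h] at this; exact this.symm
      subst hab
      have hfe : fE v = fE w := add_left_cancel (heq.trans hd)
      have hbar : barE w = barE v := by
        rw [barE_eq_monomial, barE_eq_monomial, hfe]
      have htw : tildeE w = tildeE v := by
        have := ht
        simp only [tildeE, hbar] at this
        exact add_left_cancel this
      rw [ih v htw hbar]

/-- the string-to-polynomial encoding w ↦ (tilde(w), bar(w)) is
injective on words. -/
theorem stmt_11 {A : Type*} :
    Function.Injective (fun w : List A => (tildeE w, barE w)) := by
  intro w v h
  simp only [Prod.mk.injEq] at h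
  exact key w v h.1 h.2
end

section
/- Let Σ be an alphabet and p : Σ → Σ* a word substitution. Encode words w = a₁…aₙ as polynomials in ℚ[{x̃_a}_{a∈Σ} ∪ {x̄_a}_{a∈Σ}] by bar(w) := ∏ᵢ x̄_{aᵢ} and tilde(ε) := 0, tilde(a·w) := x̃_a·bar(w) + tilde(w). Let φ_p be the ℚ-algebra endomorphism of ℚ[{x̃_a}_{a∈Σ} ∪ {x̄_a}_{a∈Σ}] determined by x̃_a ↦ tilde(p(a)) and x̄_a ↦ bar(p(a)). Then for every word w ∈ Σ*: φ_p(tilde(w)) = tilde(p(w)) and φ_p(bar(w)) = bar(p(w)), where p(w) denotes the letterwise extension p(a₁)⋯p(aₙ). -/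
open MvPolynomial

theorem barE_cons {A : Type*} (a : A) (w : List A) :
    barE (a :: w) = X (Sum.inr a) * barE w := by simp [barE]

theorem barE_append {A : Type*} (u v : List A) :
    barE (u ++ v) = barE u * barE v := by simp [barE]

theorem tildeE_append {A : Type*} (u v : List A) :
    tildeE (u ++ v) = tildeE u * barE v + tildeE v := by
  induction u with
  | nil => simp [tildeE, barE]
  | cons a u ih => simp [tildeE, ih, barE_append]; ring

/-- the induced polynomial substitution φ_p is compatible with the
string-to-polynomial encoding: φ_p(tilde(w)) = tilde(p(w)) and
φ_p(bar(w)) = bar(p(w)), where p(w) is the letterwise extension of p. -/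
theorem stmt_13 {A : Type*} (p : A → List A) (w : List A) :
    MvPolynomial.aeval (R := ℚ)
        (Sum.elim (fun a : A => tildeE (p a)) (fun a : A => barE (p a)))
        (tildeE w) = tildeE (w.flatMap p) ∧
      MvPolynomial.aeval (R := ℚ)
        (Sum.elim (fun a : A => tildeE (p a)) (fun a : A => barE (p a)))
        (barE w) = barE (w.flatMap p) := by
  induction w with
  | nil => simp [tildeE, barE]
  | cons a w ih =>
    obtain ⟨ih1, ih2⟩ := ih
    constructor
    · simp only [tildeE, map_add, map_mul, aeval_X, Sum.elim_inl, ih2, List.flatMap_cons, ih1,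
        tildeE_append, barE_append]

    · simp only [barE_cons, map_mul, aeval_X, Sum.elim_inr, ih2, List.flatMap_cons, barE_append]
end

section
/- Let Σ be an alphabet and let Γ = Σ ∪ {#} with # ∉ Σ. For a ∈ Σ define the substitution subst_a : Γ* → Γ* replacing every occurrence of # by #·a (and leaving letters of Σ unchanged). Define the step function on pairs of Γ-words by step_a(R, S) = ( #·a·S·subst_a(R), a·S ). Then for every word w = a₁…aₙ ∈ Σ*, folding step over w from left to right starting from (ε, ε) yields the pair ( (#·rev(w))^{|w|}, rev(w) ), where rev is word reversal. In particular this register transducer with substitution computes the squared reverse function sqrev : w ↦ (#·rev(w))^{|w|}. -/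
/-- The alphabet Γ = Σ ∪ {#} is modelled as `Option A`, with `none` playing the
role of # and `some a` the role of a letter a ∈ Σ.
`substHash a` replaces every occurrence of # by #·a, leaving letters of Σ
unchanged. -/
def substHash {A : Type*} (a : A) (R : List (Option A)) : List (Option A) :=
  R.flatMap fun c =>
    match c with
    | none => [none, some a]
    | some b => [some b]

/-- step_a(R, S) = ( #·a·S·subst_a(R), a·S ). -/
def stepFst {A : Type*} (a : A) (RS : List (Option A) × List (Option A)) :
    List (Option A) × List (Option A) :=
  (none :: some a :: RS.2 ++ substHash a RS.1, some a :: RS.2)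

lemma substHash_map_some {A : Type*} (a : A) (l : List A) :
    substHash a (l.map some) = l.map some := by
  induction l with
  | nil => rfl
  | cons b t ih => simp [substHash, List.flatMap_cons] at ih ⊢; exact ih

lemma substHash_append {A : Type*} (a : A) (x y : List (Option A)) :
    substHash a (x ++ y) = substHash a x ++ substHash a y := by
  simp [substHash]

lemma substHash_repl {A : Type*} (a : A) (n : ℕ) (l : List A) :
    substHash a (List.replicate n ((none : Option A) :: l.map some)).flatten =
      (List.replicate n ((none : Option A) :: some a :: l.map some)).flatten := by
  induction n with
  | zero => rfl
  | succ n ih =>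
      simp only [List.replicate_succ, List.flatten_cons, substHash_append, ih]
      congr 1
      have := substHash_map_some a l
      simp only [substHash, List.flatMap_cons] at this ⊢
      rw [this]; rfl

/-- folding step over w from (ε, ε) yields
( (#·rev(w))^{|w|}, rev(w) ); i.e. this register transducer with substitution
computes the squared reverse function. -/
theorem stmt_14 {A : Type*} (w : List A) :
    w.foldl (fun RS a => stepFst a RS) ([], []) =
      ((List.replicate w.length ((none : Option A) :: w.reverse.map some)).flatten,
        w.reverse.map some) := by
  induction w using List.reverseRecOn with
  | nil => rfl
  | append_singleton w a ih =>
      rw [List.foldl_append, ih]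
      simp only [List.foldl_cons, List.foldl_nil, stepFst, List.reverse_append,
        List.reverse_cons, List.reverse_nil, List.nil_append, List.length_append,
        List.length_singleton, List.map_cons]
      simp only [Prod.mk.injEq, List.map_append, List.map_cons, List.map_nil,
        List.singleton_append, and_true]
      rw [substHash_repl]
      rw [show w.length + 1 = 1 + w.length by omega]
      simp [List.replicate_add]
end
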